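/- arXiv:2201.09551 — 3 statements merged into one kernel-verified Lean document; each statement's English description precedes it below -/
import Mathlib

section
/- In a topos, consider the kernel pair (p₁,p₂) : P ⇉ B of f : B → A, the pullback r : R → C of p₁ along an epimorphism g : C → B (with r₂ : R → P), and the further pullback giving the kernel pair (q₁,q₂) : Q ⇉ C of f∘g. Then the universal quantification of the mono ⟨q₁,q₂⟩ : Q ↪ C × C along g × g : C × C → B × B is the mono ⟨p₁,p₂⟩ : P ↪ B × B, i.e., ∀_{g×g}⟨q₁,q₂⟩ = ⟨p₁,p₂⟩ as subobjects of B × B. -/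
open CategoryTheory CategoryTheory.Limits

universe v u

/-!
A subobject `u` of `B ⨯ B` lies in the kernel pair of `f` iff its two projections are equalised
by `f`. Pulling `u` back along the epimorphism `g ⨯ g` gives an epi cover `a` of `u`, and
precomposing with `a` neither creates nor destroys such an equation; hence `(g ⨯ g)^* u` lies in
the kernel pair of `g ≫ f` iff `u` lies in that of `f`. By the adjunction, both sides of the
claimed equation therefore have the same subobjects below them.
-/

namespace CategoryTheory

variable {C : Type u} [Category.{v} C]

lemma epi_prodMap_id [HasBinaryProducts C]
    [(MorphismProperty.epimorphisms C).IsStableUnderBaseChange]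
    {X Y : C} (g : X ⟶ Y) [Epi g] (Z : C) : Epi (prod.map g (𝟙 Z)) :=
  (MorphismProperty.epimorphisms C).of_isPullback (IsPullback.of_prod_fst_with_id g Z)
    (.infer_property g)

lemma epi_prodMap [HasBinaryProducts C] [(MorphismProperty.epimorphisms C).IsStableUnderBaseChange]
    {X Y X' Y' : C} (g : X ⟶ Y) (h : X' ⟶ Y') [Epi g] [Epi h] : Epi (prod.map g h) := by
  have hg := epi_prodMap_id g X'
  have hh : Epi (prod.map (𝟙 Y) h) := by
    rw [← epi_comp_iff_of_isIso _ (prod.braiding _ _).hom, braid_natural]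
    have := epi_prodMap_id h Y
    infer_instance
  rw [show prod.map g h = prod.map g (𝟙 X') ≫ prod.map (𝟙 Y) h by simp]
  exact epi_comp _ _

lemma Subobject.mk_le_mk_prodLift_pullback_iff [HasBinaryProducts C] {A B X : C} (f : B ⟶ A)
    [HasPullback f f] [Mono (prod.lift (pullback.fst f f) (pullback.snd f f))]
    (m : X ⟶ B ⨯ B) [Mono m] :
    Subobject.mk m ≤ Subobject.mk (prod.lift (pullback.fst f f) (pullback.snd f f)) ↔
      m ≫ prod.fst ≫ f = m ≫ prod.snd ≫ f := by
  constructor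
  · intro hle
    rw [← Subobject.ofMkLEMk_comp hle]
    simp [prod.lift_fst_assoc, prod.lift_snd_assoc, pullback.condition]
  · intro hm
    refine Subobject.mk_le_mk_of_comm
      (pullback.lift (m ≫ prod.fst) (m ≫ prod.snd) (by simpa using hm)) ?_
    ext <;> simp [prod.lift_fst, prod.lift_snd, pullback.lift_fst, pullback.lift_snd]

lemma Subobject.pullback_prodMap_le_mk_prodLift_pullback_iff [HasFiniteLimits C]
    [(MorphismProperty.epimorphisms C).IsStableUnderBaseChange] {A B X : C}
    (f : B ⟶ A) (g : X ⟶ B) [Epi g]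
    [Mono (prod.lift (pullback.fst f f) (pullback.snd f f))]
    [Mono (prod.lift (pullback.fst (g ≫ f) (g ≫ f)) (pullback.snd (g ≫ f) (g ≫ f)))]
    (u : Subobject (B ⨯ B)) :
    (Subobject.pullback (prod.map g g)).obj u ≤
        Subobject.mk (prod.lift (pullback.fst (g ≫ f) (g ≫ f)) (pullback.snd (g ≫ f) (g ≫ f))) ↔
      u ≤ Subobject.mk (prod.lift (pullback.fst f f) (pullback.snd f f)) := by
  have hgg := epi_prodMap g g
  have ha : Epi (pullback.fst u.arrow (prod.map g g)) :=
    (MorphismProperty.epimorphisms C).pullback_fst _ _ (.infer_property _)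
  conv_rhs => rw [← Subobject.mk_arrow u]
  rw [Subobject.pullback_obj, mk_le_mk_prodLift_pullback_iff, mk_le_mk_prodLift_pullback_iff,
    ← cancel_epi (pullback.fst u.arrow (prod.map g g)),
    pullback.condition_assoc, pullback.condition_assoc, prod.map_fst_assoc, prod.map_snd_assoc]

end CategoryTheory

/-- in a topos (a finitely complete category with pullback-stable
epimorphisms, with `∀` the right adjoint of pullback of subobjects), if
`(p₁,p₂)` is the kernel pair of `f : B ⟶ A`, `g : C ⟶ B` is epi, and `(q₁,q₂)` is
the kernel pair of `g ≫ f`, then `∀_{g×g}⟨q₁,q₂⟩ = ⟨p₁,p₂⟩` as subobjects of `B × B`. -/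
theorem stmt13 {C : Type u} [Category.{v} C] [HasFiniteLimits C]
    (hstab : ∀ {P X Y Z : C} (fst : P ⟶ X) (snd : P ⟶ Y) (f : X ⟶ Z) (g : Y ⟶ Z),
      IsPullback fst snd f g → Epi g → Epi fst)
    {A B Cc : C} (f : B ⟶ A) (g : Cc ⟶ B) [Epi g]
    [Mono (prod.lift (pullback.fst f f) (pullback.snd f f))]
    [Mono (prod.lift (pullback.fst (g ≫ f) (g ≫ f)) (pullback.snd (g ≫ f) (g ≫ f)))]
    (uQ : Subobject (Cc ⨯ Cc) → Subobject (B ⨯ B))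
    (huQ : ∀ (u : Subobject (B ⨯ B)) (v : Subobject (Cc ⨯ Cc)),
      (Subobject.pullback (prod.map g g)).obj u ≤ v ↔ u ≤ uQ v) :
    uQ (Subobject.mk
        (prod.lift (pullback.fst (g ≫ f) (g ≫ f)) (pullback.snd (g ≫ f) (g ≫ f)))) =
      Subobject.mk (prod.lift (pullback.fst f f) (pullback.snd f f)) := by
  have : (MorphismProperty.epimorphisms C).IsStableUnderBaseChange :=
    ⟨fun sq hg => @hstab _ _ _ _ _ _ _ _ sq.flip hg⟩
  refine eq_of_forall_le_iff fun u => ?_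
  rw [← huQ, Subobject.pullback_prodMap_le_mk_prodLift_pullback_iff]
end

section
/- In a topos, if a subobject ⟨x,y⟩ : S ↪ B × B satisfies (g×g)*⟨x,y⟩ ≤ ⟨q₁,q₂⟩ where g : C → B is an epimorphism and (q₁,q₂) is the kernel pair of f∘g, then f∘x = f∘y, i.e., ⟨x,y⟩ factors through the kernel pair of f. -/
open CategoryTheory CategoryTheory.Limits

universe v u

/-
Proof idea: the pullback of `⟨x, y⟩` along `g × g` lies in the kernel pair of `g ≫ f`, so its
two legs agree after `g ≫ f`; by the pullback square, `x ≫ f` and `y ≫ f` then agree after the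
projection of the pullback onto `S`. That projection is a pullback of
`g × g = (g × 1) ≫ (1 × g)`, a composite of pullbacks of `g`, hence epi and cancellable.
-/

section

variable {C : Type u} [Category.{v} C] [HasBinaryProducts C]
  [(MorphismProperty.epimorphisms C).IsStableUnderBaseChange]

lemma epi_prod_map_id_left {X X' : C} (g : X ⟶ X') [Epi g] (Y : C) :
    Epi (prod.map g (𝟙 Y)) :=
  (MorphismProperty.epimorphisms C).of_isPullback (IsPullback.of_prod_fst_with_id g Y)
    (.infer_property g)

lemma epi_prod_map_id_right {X X' : C} (g : X ⟶ X') [Epi g] (Y : C) :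
    Epi (prod.map (𝟙 Y) g) := by
  have := epi_prod_map_id_left g Y
  rw [← epi_comp_iff_of_epi (prod.braiding X Y).hom, ← braid_natural]
  infer_instance

lemma epi_prod_map {X X' Y Y' : C} (g : X ⟶ X') (g' : Y ⟶ Y') [Epi g] [Epi g'] :
    Epi (prod.map g g') := by
  have := epi_prod_map_id_left g Y
  have := epi_prod_map_id_right g' X'
  rw [← Category.id_comp g', ← Category.comp_id g, ← prod.map_map]
  infer_instance

end

lemma comp_fst_comp_eq_comp_snd_comp_of_mk_le_kernelPair {C : Type u} [Category.{v} C]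
    {T X A : C} [HasBinaryProduct X X] (k : X ⟶ A) [HasPullback k k] (t : T ⟶ X ⨯ X) [Mono t]
    [Mono (prod.lift (pullback.fst k k) (pullback.snd k k))]
    (h : Subobject.mk t ≤ Subobject.mk (prod.lift (pullback.fst k k) (pullback.snd k k))) :
    t ≫ prod.fst ≫ k = t ≫ prod.snd ≫ k := by
  rw [← Subobject.ofMkLEMk_comp h]
  simp only [Category.assoc, prod.lift_fst_assoc, prod.lift_snd_assoc, pullback.condition]

/-- in a topos (finitely complete, epis stable under pullback), if a
subobject `⟨x,y⟩ : S ↪ B × B` satisfies `(g×g)*⟨x,y⟩ ≤ ⟨q₁,q₂⟩`, where `g : C ⟶ B`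
is epi and `(q₁,q₂)` is the kernel pair of `g ≫ f`, then `x ≫ f = y ≫ f`. -/
theorem stmt14 {C : Type u} [Category.{v} C] [HasFiniteLimits C]
    (hstab : ∀ {P X Y Z : C} (fst : P ⟶ X) (snd : P ⟶ Y) (f : X ⟶ Z) (g : Y ⟶ Z),
      IsPullback fst snd f g → Epi g → Epi fst)
    {A B Cc : C} (f : B ⟶ A) (g : Cc ⟶ B) [Epi g]
    [Mono (prod.lift (pullback.fst (g ≫ f) (g ≫ f)) (pullback.snd (g ≫ f) (g ≫ f)))]
    {S : C} (x y : S ⟶ B) [Mono (prod.lift x y)]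
    (h : (Subobject.pullback (prod.map g g)).obj (Subobject.mk (prod.lift x y)) ≤
      Subobject.mk
        (prod.lift (pullback.fst (g ≫ f) (g ≫ f)) (pullback.snd (g ≫ f) (g ≫ f)))) :
    x ≫ f = y ≫ f := by
  have : (MorphismProperty.epimorphisms C).IsStableUnderBaseChange :=
    ⟨fun sq hg => hstab _ _ _ _ sq.flip hg⟩
  have hsq := IsPullback.of_hasPullback (prod.lift x y) (prod.map g g)
  rw [Subobject.pullback_obj_mk hsq] at h
  have hker := comp_fst_comp_eq_comp_snd_comp_of_mk_le_kernelPair (g ≫ f) _ h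
  have : Epi (prod.map g g) := epi_prod_map g g
  set p := pullback.fst (prod.lift x y) (prod.map g g)
  set q := pullback.snd (prod.lift x y) (prod.map g g)
  have : Epi p := hstab _ _ _ _ hsq inferInstance
  have hx : p ≫ x = q ≫ prod.fst ≫ g := by
    simpa only [Category.assoc, prod.lift_fst, prod.map_fst] using hsq.w =≫ prod.fst
  have hy : p ≫ y = q ≫ prod.snd ≫ g := by
    simpa only [Category.assoc, prod.lift_snd, prod.map_snd] using hsq.w =≫ prod.snd
  rw [← cancel_epi p, reassoc_of% hx, reassoc_of% hy, hker]
end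

section
/- For every topos T, the category Span_E(T) of spans modulo the relation generated by epimorphisms (equivalently, Rel(T)) is a division allegory: for each morphism φ : A → B and each object C, the order-preserving precomposition map (−)∘φ : Hom(B,C) → Hom(A,C) has a right adjoint (−)/φ, given on a relation [h,k] by [π₁∘a, π₂∘a] where a = ∀_{g×1}(f×1)*(m_{⟨h,k⟩}) and m_{⟨h,k⟩} is the mono part of ⟨h,k⟩ and φ = [f,g]. -/
/-!
Read both sides through generalized elements. `relComp φ ψ` is the image of the span `(a, c)`
out of the object of composable pairs `a φ b`, `b ψ c`, so it lies below `χ` exactly when `χ`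
factors that span. Writing `φ = [f, g]`, the adjunction `(g × 1)* ⊣ ∀_{g×1}` turns the right-hand
side into `(g × 1)* ψ ≤ (f × 1)* χ`, i.e. `χ` factors `(f × 1) ∘ m` with `m` the mono of
`(g × 1)* ψ`. The domain of `m` is again the object of composable pairs, presented as pairs
`(x ∈ φ, c)` with `g x ψ c`, so the two spans factor through each other.
-/

open CategoryTheory CategoryTheory.Limits

universe v u

variable {C : Type u} [Category.{v} C] [HasFiniteLimits C] [HasImages C]

/-- Composition of relations (subobjects of products) by pullback and image. -/
noncomputable def relComp {X Y Z : C}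
    (R : Subobject (X ⨯ Y)) (S : Subobject (Y ⨯ Z)) : Subobject (X ⨯ Z) :=
  Subobject.mk (image.ι (prod.lift
    (pullback.fst (R.arrow ≫ prod.snd) (S.arrow ≫ prod.fst) ≫ R.arrow ≫ prod.fst)
    (pullback.snd (R.arrow ≫ prod.snd) (S.arrow ≫ prod.fst) ≫ S.arrow ≫ prod.snd)))

/-- The identity relation: the diagonal subobject. -/
noncomputable def idRelSub (X : C) : Subobject (X ⨯ X) := Subobject.mk (diag X)

namespace CategoryTheory.Subobject

variable {D : Type*} [Category D]

theorem le_iff_factors_arrow {Y : D} {P Q : Subobject Y} : P ≤ Q ↔ Q.Factors P.arrow :=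
  ⟨fun h => factors_of_le _ h P.factors_self, le_of_factors⟩

theorem imageSubobject_le_iff_factors {X Y : D} (f : X ⟶ Y) [HasImage f] {S : Subobject Y} :
    imageSubobject f ≤ S ↔ S.Factors f := by
  refine ⟨fun h => factors_of_le f h ?_, fun h => imageSubobject_le f _ (S.factorThru_arrow f h)⟩
  simpa using imageSubobject_factors_comp_self f (𝟙 X)

theorem factors_iff_of_factorizations {P Q Y : D} {S : Subobject Y} {u : P ⟶ Y} {v : Q ⟶ Y}
    (hu : ∃ α : P ⟶ Q, α ≫ v = u) (hv : ∃ β : Q ⟶ P, β ≫ u = v) :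
    S.Factors u ↔ S.Factors v := by
  obtain ⟨α, rfl⟩ := hu
  obtain ⟨β, hβ⟩ := hv
  exact ⟨fun h => hβ ▸ factors_of_factors_right β h, factors_of_factors_right α⟩

end CategoryTheory.Subobject

section RelationalComposite

variable {D : Type*} [Category D] [HasFiniteLimits D] {X Y Z : D}
  (φ : Subobject (X ⨯ Y)) (ψ : Subobject (Y ⨯ Z))

noncomputable def relCompSpan : pullback (φ.arrow ≫ prod.snd) (ψ.arrow ≫ prod.fst) ⟶ X ⨯ Z :=
  prod.lift (pullback.fst _ _ ≫ φ.arrow ≫ prod.fst) (pullback.snd _ _ ≫ ψ.arrow ≫ prod.snd)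

theorem relComp_le_iff_factors [HasImages D] (χ : Subobject (X ⨯ Z)) :
    relComp φ ψ ≤ χ ↔ χ.Factors (relCompSpan φ ψ) :=
  Subobject.imageSubobject_le_iff_factors _

/-- The span `(f × 1) ∘ m` with `m` the mono of `(g × 1)* ψ`, where `φ = [f, g]`. -/
noncomputable def relCompSpanOfPullback :
    ((Subobject.pullback (prod.map (φ.arrow ≫ prod.snd) (𝟙 Z))).obj ψ : D) ⟶ X ⨯ Z :=
  ((Subobject.pullback (prod.map (φ.arrow ≫ prod.snd) (𝟙 Z))).obj ψ).arrow ≫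
    prod.map (φ.arrow ≫ prod.fst) (𝟙 Z)

theorem exists_comp_relCompSpanOfPullback_eq :
    ∃ α, α ≫ relCompSpanOfPullback φ ψ = relCompSpan φ ψ := by
  set x := prod.lift (pullback.fst (φ.arrow ≫ prod.snd) (ψ.arrow ≫ prod.fst))
    (pullback.snd _ _ ≫ ψ.arrow ≫ prod.snd)
  have hx : x ≫ prod.map (φ.arrow ≫ prod.snd) (𝟙 Z) = pullback.snd _ _ ≫ ψ.arrow := by
    ext <;> simp [-prod.lift_map, x, prod.lift_fst_assoc, prod.lift_snd, pullback.condition]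
  have hQ := (pullback_factors_iff _ ψ x).mpr (hx ▸ Subobject.factors_comp_arrow _)
  refine ⟨Subobject.factorThru _ x hQ, ?_⟩
  rw [relCompSpanOfPullback, Subobject.factorThru_arrow_assoc]
  ext <;> simp [-prod.lift_map, x, relCompSpan, prod.lift_fst_assoc, prod.lift_fst, prod.lift_snd]

theorem exists_comp_relCompSpan_eq :
    ∃ β, β ≫ relCompSpan φ ψ = relCompSpanOfPullback φ ψ := by
  have w := (Subobject.isPullback (prod.map (φ.arrow ≫ prod.snd) (𝟙 Z)) ψ).w
  refine ⟨pullback.lift (Subobject.arrow _ ≫ prod.fst) (Subobject.pullbackπ _ ψ) ?_, ?_⟩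
  · simpa using (congrArg (· ≫ prod.fst) w).symm
  · have w₂ := congrArg (· ≫ prod.snd) w
    simp only [Category.assoc, prod.map_snd, Category.comp_id] at w₂
    ext <;> simp [relCompSpan, relCompSpanOfPullback, w₂, prod.lift_fst, prod.lift_snd,
      pullback.lift_fst_assoc, pullback.lift_snd_assoc]

end RelationalComposite

theorem stmt16_general {C : Type u} [Category.{v} C] [HasFiniteLimits C] [HasImages C]
    (uA : ∀ {X Y : C} (h : X ⟶ Y), Subobject X → Subobject Y)
    (huA : ∀ {X Y : C} (h : X ⟶ Y) (u : Subobject Y) (v : Subobject X),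
      (Subobject.pullback h).obj u ≤ v ↔ u ≤ uA h v)
    {A B Cc : C} (φ : Subobject (A ⨯ B)) (ψ : Subobject (B ⨯ Cc))
    (χ : Subobject (A ⨯ Cc)) :
    relComp φ ψ ≤ χ ↔
      ψ ≤ uA (prod.map (φ.arrow ≫ prod.snd) (𝟙 Cc))
        ((Subobject.pullback (prod.map (φ.arrow ≫ prod.fst) (𝟙 Cc))).obj χ) := by
  rw [← huA, relComp_le_iff_factors, Subobject.le_iff_factors_arrow, pullback_factors_iff]
  exact Subobject.factors_iff_of_factorizations (exists_comp_relCompSpanOfPullback_eq φ ψ)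
    (exists_comp_relCompSpan_eq φ ψ)

/-- for every topos `T`, `Span_E(T) ≅ Rel(T)` is a division allegory:
for `φ : A → B` (a relation, i.e. a subobject of `A × B`) and any object `C`,
precomposition `(−)∘φ` has a right adjoint `(−)/φ` given by
`χ ↦ ∀_{g×1}((f×1)*(χ))` where `f = φ.arrow ≫ π₁`, `g = φ.arrow ≫ π₂`. -/
theorem stmt16 {C : Type u} [Category.{v} C] [HasFiniteLimits C] [HasImages C]
    (hreg : ∀ {X Y : C} (f : X ⟶ Y), Nonempty (RegularEpi (factorThruImage f)))
    (hstab : ∀ {P X Y Z : C} (fst : P ⟶ X) (snd : P ⟶ Y) (f : X ⟶ Z) (g : Y ⟶ Z),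
      IsPullback fst snd f g → Nonempty (RegularEpi g) → Nonempty (RegularEpi fst))
    (uA : ∀ {X Y : C} (h : X ⟶ Y), Subobject X → Subobject Y)
    (huA : ∀ {X Y : C} (h : X ⟶ Y) (u : Subobject Y) (v : Subobject X),
      (Subobject.pullback h).obj u ≤ v ↔ u ≤ uA h v)
    {A B Cc : C} (φ : Subobject (A ⨯ B)) (ψ : Subobject (B ⨯ Cc))
    (χ : Subobject (A ⨯ Cc)) :
    relComp φ ψ ≤ χ ↔
      ψ ≤ uA (prod.map (φ.arrow ≫ prod.snd) (𝟙 Cc))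
        ((Subobject.pullback (prod.map (φ.arrow ≫ prod.fst) (𝟙 Cc))).obj χ) :=
  stmt16_general uA huA φ ψ χ
end
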